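/- For the Fourier transform on ℝ with kernel e^{-2πixy} and for 0 < Re(s) < 1, the tempered distribution |x|^{s-1} has Fourier transform γ₊(s)·|y|^{-s}, where γ₊(s) = π^(1/2-s)·Γ(s/2)/Γ((1-s)/2). Concretely: for every Schwartz function α on ℝ, ∫_ℝ 𝓕α(y)·|y|^{s-1} dy = γ₊(s)·∫_ℝ α(x)·|x|^{-s} dx. -/

import Mathlib

open Real Complex MeasureTheory

/-- The Tate Gamma function for the trivial character on `ℝ`. -/
noncomputable def gammaPlus (s : ℂ) : ℂ :=
  (Real.pi : ℂ) ^ (1/2 - s) * Complex.Gamma (s/2) / Complex.Gamma ((1 - s)/2)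

/-!
For `0 < Re a`, the Gamma integral writes `|x|^{-a}` as `π^{a/2} Γ(a/2)⁻¹` times the Mellin
transform at `a/2` of `t ↦ e^{-π t x²}`. For `Re a < 1` Fubini applies, so the pairing of a bounded
integrable `f` with `|x|^{-a}` is the Mellin transform at `a/2` of `t ↦ ∫ e^{-π t x²} f(x) dx`.
For `f = 𝓕α`, Parseval and the Fourier self-duality of Gaussians turn this function of `t` into
`t^{-1/2}` times the one for `α` at `1/t`, which reflects the Mellin variable `w ↦ 1/2 - w`.
Taking `a = 1 - s` on the left and `a = s` on the right, both sides become the same Mellin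
transform, and the ratio of the Gamma factors is `γ₊(s)`.
-/

open Set FourierTransform

noncomputable def gaussianPairing (f : ℝ → ℂ) (t : ℝ) : ℂ :=
  ∫ x : ℝ, cexp (-π * t * x ^ 2) * f x

lemma mellin_cexp_neg_mul {r : ℝ} (hr : 0 < r) {s : ℂ} (hs : 0 < s.re) :
    mellin (fun t : ℝ ↦ cexp (-(r * t))) s = (r : ℂ) ^ (-s) * Complex.Gamma s := by
  have h := mellin_comp_mul_left (fun t : ℝ ↦ ((rexp (-t) : ℝ) : ℂ)) s hr
  rw [← GammaIntegral_eq_mellin, ← Complex.Gamma_eq_integral hs, smul_eq_mul] at h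
  simpa only [ofReal_exp, ofReal_neg, ofReal_mul] using h

lemma ofReal_abs_cpow_neg_eq_mellin {y : ℝ} (hy : y ≠ 0) {a : ℂ} (ha : 0 < a.re) :
    ((|y| : ℝ) : ℂ) ^ (-a) = (π : ℂ) ^ (a / 2) / Complex.Gamma (a / 2) *
      mellin (fun t : ℝ ↦ cexp (-π * t * y ^ 2)) (a / 2) := by
  have hGamma : Complex.Gamma (a / 2) ≠ 0 := Gamma_ne_zero_of_re_pos (by simpa using ha)
  have hmellin := mellin_cexp_neg_mul (by positivity : 0 < π * y ^ 2) (s := a / 2)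
    (by simpa using ha)
  have hpow : ((π * y ^ 2 : ℝ) : ℂ) ^ (-(a / 2)) =
      (π : ℂ) ^ (-(a / 2)) * ((|y| : ℝ) : ℂ) ^ (-a) := by
    rw [ofReal_mul, mul_cpow_ofReal_nonneg pi_pos.le (sq_nonneg y), ← sq_abs,
      ← rpow_two, ← cpow_mul_ofReal_nonneg (abs_nonneg y)]
    push_cast
    ring_nf
  simp only [show ∀ t : ℝ, -(π : ℂ) * t * y ^ 2 = -(((π * y ^ 2 : ℝ) : ℂ) * t) from
    fun t ↦ by push_cast; ring, hmellin, hpow, cpow_neg]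
  field_simp

lemma norm_cexp_neg_pi_mul_sq (t x : ℝ) :
    ‖cexp (-π * t * x ^ 2)‖ = rexp (-π * t * x ^ 2) := by
  rw [norm_exp]
  norm_cast

lemma norm_cexp_neg_pi_mul_sq_le_one {t : ℝ} (ht : 0 ≤ t) (x : ℝ) :
    ‖cexp (-π * t * x ^ 2)‖ ≤ 1 := by
  rw [norm_cexp_neg_pi_mul_sq, exp_le_one_iff, neg_mul, neg_mul, neg_nonpos]
  positivity

lemma integrable_cexp_neg_pi_mul_sq_mul {f : ℝ → ℂ} (hf : Integrable f) {t : ℝ} (ht : 0 ≤ t) :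
    Integrable (fun x : ℝ ↦ cexp (-π * t * x ^ 2) * f x) :=
  hf.bdd_mul (by fun_prop : Continuous fun x : ℝ ↦ cexp (-π * t * x ^ 2)).aestronglyMeasurable
    (.of_forall (norm_cexp_neg_pi_mul_sq_le_one ht))

lemma integral_norm_cexp_neg_pi_mul_sq_mul_le {f : ℝ → ℂ} (hf : Integrable f) {t : ℝ}
    (ht : 0 ≤ t) : ∫ x : ℝ, ‖cexp (-π * t * x ^ 2) * f x‖ ≤ ∫ x : ℝ, ‖f x‖ := by
  refine integral_mono_of_nonneg (.of_forall fun _ ↦ norm_nonneg _) hf.norm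
    (.of_forall fun x ↦ ?_)
  simp only [norm_mul]
  exact mul_le_of_le_one_left (norm_nonneg _) (norm_cexp_neg_pi_mul_sq_le_one ht x)

lemma integral_norm_cexp_neg_pi_mul_sq_mul_le_rpow {f : ℝ → ℂ} {C : ℝ} (hC : ∀ x, ‖f x‖ ≤ C)
    {t : ℝ} (ht : 0 < t) :
    ∫ x : ℝ, ‖cexp (-π * t * x ^ 2) * f x‖ ≤ C * t ^ (-(1 / 2) : ℝ) := by
  calc ∫ x : ℝ, ‖cexp (-π * t * x ^ 2) * f x‖ ≤ ∫ x : ℝ, C * rexp (-(π * t) * x ^ 2) := by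
        refine integral_mono_of_nonneg (.of_forall fun _ ↦ norm_nonneg _)
          ((integrable_exp_neg_mul_sq (by positivity)).const_mul C) (.of_forall fun x ↦ ?_)
        simp only [norm_mul, norm_cexp_neg_pi_mul_sq]
        rw [mul_comm, neg_mul]
        exact mul_le_mul_of_nonneg_right (hC x) (exp_pos _).le
    _ = C * t ^ (-(1 / 2) : ℝ) := by
        rw [integral_const_mul, integral_gaussian, div_mul_cancel_left₀ pi_ne_zero, sqrt_eq_rpow,
          inv_rpow ht.le, rpow_neg ht.le]

lemma integrableOn_Ioi_of_norm_le_rpow {g : ℝ → ℝ}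
    (hg : AEStronglyMeasurable g (volume.restrict (Ioi 0))) {M a b : ℝ} (ha : -1 < a)
    (hb : b < -1) (h₀ : ∀ t ∈ Ioc (0 : ℝ) 1, ‖g t‖ ≤ M * t ^ a)
    (h₁ : ∀ t ∈ Ioi (1 : ℝ), ‖g t‖ ≤ M * t ^ b) : IntegrableOn g (Ioi 0) := by
  rw [← Ioc_union_Ioi_eq_Ioi zero_le_one]
  refine IntegrableOn.union ?_ ?_
  · have hint : IntegrableOn (fun t : ℝ ↦ M * t ^ a) (Ioc 0 1) :=
      ((intervalIntegrable_iff_integrableOn_Ioc_of_le zero_le_one).mp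
        (intervalIntegral.intervalIntegrable_rpow' ha)).const_mul M
    exact hint.mono' (hg.mono_measure (Measure.restrict_mono Ioc_subset_Ioi_self le_rfl))
      ((ae_restrict_iff' measurableSet_Ioc).mpr (.of_forall h₀))
  · exact ((integrableOn_Ioi_rpow_of_lt hb zero_lt_one).const_mul M).mono'
      (hg.mono_measure (Measure.restrict_mono (Ioi_subset_Ioi zero_le_one) le_rfl))
      ((ae_restrict_iff' measurableSet_Ioi).mpr (.of_forall h₁))

lemma integrable_cpow_mul_cexp_neg_pi_mul_sq_mul {f : ℝ → ℂ} (hf : Integrable f) {C : ℝ}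
    (hC : ∀ x, ‖f x‖ ≤ C) {b : ℂ} (hb₀ : 0 < b.re) (hb₁ : b.re < 1 / 2) :
    Integrable (fun p : ℝ × ℝ ↦ (p.1 : ℂ) ^ (b - 1) * (cexp (-π * p.1 * p.2 ^ 2) * f p.2))
      ((volume.restrict (Ioi 0)).prod volume) := by
  have hmeas : AEStronglyMeasurable
      (fun p : ℝ × ℝ ↦ (p.1 : ℂ) ^ (b - 1) * (cexp (-π * p.1 * p.2 ^ 2) * f p.2))
      ((volume.restrict (Ioi 0)).prod volume) :=
    (by fun_prop : Measurable fun p : ℝ × ℝ ↦ (p.1 : ℂ) ^ (b - 1)).aestronglyMeasurable.mul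
      ((by fun_prop : Continuous fun p : ℝ × ℝ ↦ cexp (-π * p.1 * p.2 ^ 2)).aestronglyMeasurable.mul
        hf.aestronglyMeasurable.comp_snd)
  refine (integrable_prod_iff hmeas).mpr ⟨?_, ?_⟩
  · filter_upwards [ae_restrict_mem measurableSet_Ioi] with t ht
    exact (integrable_cexp_neg_pi_mul_sq_mul hf (le_of_lt ht)).const_mul _
  have hnorm : ∀ t ∈ Ioi (0 : ℝ),
      ∫ x : ℝ, ‖(t : ℂ) ^ (b - 1) * (cexp (-π * t * x ^ 2) * f x)‖ =
        t ^ (b.re - 1) * ∫ x : ℝ, ‖cexp (-π * t * x ^ 2) * f x‖ := fun t ht ↦ by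
    simp only [norm_mul (_ ^ _), integral_const_mul, norm_cpow_eq_rpow_re_of_pos ht, sub_re,
      one_re]
  -- bound the inner integral by `∫ ‖f‖` on `(0, 1]` and by `C t^{-1/2}` on `(1, ∞)`
  refine integrableOn_Ioi_of_norm_le_rpow hmeas.norm.integral_prod_right'
    (M := max (∫ x : ℝ, ‖f x‖) C) (a := b.re - 1) (b := b.re - 1 + -(1 / 2))
    (by linarith) (by linarith) (fun t ht ↦ ?_) (fun t ht ↦ ?_)
  · have ht₀ : 0 < t := ht.1
    rw [norm_of_nonneg (integral_nonneg fun _ ↦ norm_nonneg _), hnorm t ht₀, mul_comm (max _ _)]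
    exact mul_le_mul_of_nonneg_left
      ((integral_norm_cexp_neg_pi_mul_sq_mul_le hf ht₀.le).trans (le_max_left _ _))
      (by positivity)
  · have ht₀ : 0 < t := zero_lt_one.trans ht
    rw [norm_of_nonneg (integral_nonneg fun _ ↦ norm_nonneg _), hnorm t ht₀, rpow_add ht₀,
      mul_left_comm]
    exact mul_le_mul_of_nonneg_left ((integral_norm_cexp_neg_pi_mul_sq_mul_le_rpow hC ht₀).trans
      (mul_le_mul_of_nonneg_right (le_max_right _ _) (by positivity))) (by positivity)

theorem integral_mul_abs_cpow_neg_eq_mellin_gaussianPairing {f : ℝ → ℂ} (hf : Integrable f)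
    {C : ℝ} (hC : ∀ x, ‖f x‖ ≤ C) {a : ℂ} (ha₀ : 0 < a.re) (ha₁ : a.re < 1) :
    ∫ x : ℝ, f x * ((|x| : ℝ) : ℂ) ^ (-a) =
      (π : ℂ) ^ (a / 2) / Complex.Gamma (a / 2) * mellin (gaussianPairing f) (a / 2) := by
  have hint := integrable_cpow_mul_cexp_neg_pi_mul_sq_mul hf hC (b := a / 2)
    (by simpa using ha₀) (by rw [div_ofNat_re]; linarith)
  calc ∫ x : ℝ, f x * ((|x| : ℝ) : ℂ) ^ (-a)
      = ∫ x : ℝ, (π : ℂ) ^ (a / 2) / Complex.Gamma (a / 2) * ∫ t in Ioi (0 : ℝ),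
          (t : ℂ) ^ (a / 2 - 1) * (cexp (-π * t * x ^ 2) * f x) := by
        refine integral_congr_ae ?_
        filter_upwards [Measure.ae_ne volume 0] with x hx
        simp only [ofReal_abs_cpow_neg_eq_mellin hx ha₀, mellin, smul_eq_mul, ← mul_assoc,
          integral_mul_const]
        ring
    _ = (π : ℂ) ^ (a / 2) / Complex.Gamma (a / 2) * mellin (gaussianPairing f) (a / 2) := by
        rw [integral_const_mul, integral_integral_swap (f := fun x t : ℝ ↦
          (t : ℂ) ^ (a / 2 - 1) * (cexp (-π * t * x ^ 2) * f x)) hint.swap]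
        simp only [mellin, gaussianPairing, smul_eq_mul, integral_const_mul]

lemma integral_mul_cexp_eq_fourier (f : ℝ → ℂ) (y : ℝ) :
    ∫ x : ℝ, f x * cexp (-(2 * π * I * x * y)) = 𝓕 f y := by
  rw [Real.fourier_real_eq_integral_exp_smul]
  congr 1 with x
  rw [smul_eq_mul, mul_comm]
  congr 2
  push_cast
  ring

lemma integral_fourier_mul_eq {f g : ℝ → ℂ} (hf : Integrable f) (hg : Integrable g) :
    ∫ y : ℝ, 𝓕 f y * g y = ∫ x : ℝ, f x * 𝓕 g x := by
  simpa [flip_innerₗ, Real.fourier_eq, VectorFourier.fourierIntegral] using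
    VectorFourier.integral_fourierIntegral_smul_eq_flip (L := innerₗ ℝ)
      Real.continuous_fourierChar continuous_inner hf hg

lemma gaussianPairing_fourier {f : ℝ → ℂ} (hf : Integrable f) {t : ℝ} (ht : 0 < t) :
    gaussianPairing (𝓕 f) t = (t : ℂ) ^ (-(1 / 2) : ℂ) * gaussianPairing f t⁻¹ := by
  have ht' : 0 < (t : ℂ).re := by simpa using ht
  have hgauss : Integrable fun x : ℝ ↦ cexp (-π * t * x ^ 2) := by
    simpa [neg_mul] using
      integrable_cexp_neg_mul_sq (b := π * t) (by simpa using mul_pos pi_pos ht)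
  simp only [gaussianPairing, mul_comm (cexp _), integral_fourier_mul_eq hf hgauss,
    fourier_gaussian_pi ht', ← integral_const_mul]
  congr 1 with x
  rw [cpow_neg, one_div, ofReal_inv]
  ring_nf

lemma mellin_gaussianPairing_fourier {f : ℝ → ℂ} (hf : Integrable f) (s : ℂ) :
    mellin (gaussianPairing (𝓕 f)) s = mellin (gaussianPairing f) (1 / 2 - s) := by
  calc mellin (gaussianPairing (𝓕 f)) s
      = mellin (fun t : ℝ ↦ (t : ℂ) ^ (-(1 / 2) : ℂ) • gaussianPairing f t⁻¹) s :=
        setIntegral_congr_fun measurableSet_Ioi fun t ht ↦ by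
          simp only [gaussianPairing_fourier hf ht, smul_eq_mul]
    _ = mellin (gaussianPairing f) (1 / 2 - s) := by
        rw [mellin_cpow_smul, mellin_comp_inv]
        ring_nf

lemma gammaPlus_mul_pi_cpow_div_Gamma {s : ℂ} (hs : 0 < s.re) :
    gammaPlus s * ((π : ℂ) ^ (s / 2) / Complex.Gamma (s / 2)) =
      (π : ℂ) ^ ((1 - s) / 2) / Complex.Gamma ((1 - s) / 2) := by
  have hGamma : Complex.Gamma (s / 2) ≠ 0 := Gamma_ne_zero_of_re_pos (by simpa using hs)
  have hpow : (π : ℂ) ^ (1 / 2 - s) * (π : ℂ) ^ (s / 2) = (π : ℂ) ^ ((1 - s) / 2) := by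
    rw [← cpow_add _ _ (ofReal_ne_zero.mpr pi_ne_zero)]
    ring_nf
  rw [gammaPlus, ← hpow]
  field_simp

theorem fourier_abs_pow (s : ℂ) (hs0 : 0 < s.re) (hs1 : s.re < 1) (α : SchwartzMap ℝ ℂ) :
    ∫ y : ℝ, (∫ x : ℝ, α x * Complex.exp (-(2 * Real.pi * Complex.I * x * y))) *
        ((|y| : ℝ) : ℂ) ^ (s - 1) =
      gammaPlus s * ∫ x : ℝ, α x * ((|x| : ℝ) : ℂ) ^ (-s) := by
  set β : SchwartzMap ℝ ℂ := 𝓕 α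
  have hβ : ⇑β = 𝓕 ⇑α := SchwartzMap.fourier_coe α
  simp only [integral_mul_cexp_eq_fourier, ← hβ]
  rw [← neg_sub 1 s,
    integral_mul_abs_cpow_neg_eq_mellin_gaussianPairing β.integrable (β.norm_le_seminorm ℝ)
      (by simpa using hs1) (by simpa using hs0),
    integral_mul_abs_cpow_neg_eq_mellin_gaussianPairing α.integrable (α.norm_le_seminorm ℝ)
      hs0 hs1,
    hβ, mellin_gaussianPairing_fourier α.integrable, ← mul_assoc,
    gammaPlus_mul_pi_cpow_div_Gamma hs0, show (1 / 2 : ℂ) - (1 - s) / 2 = s / 2 by ring]
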